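/- arXiv:2107.04368 — 5 statements merged into one kernel-verified Lean document; each statement's English description precedes it below -/
import Mathlib

section
/- Let G=(W,E) be a simple undirected graph with W={w_1,…,w_{3q}} and let (N,V) be the instance of 3D-SR-AS-BIN constructed from G by the reduction. If G has a partition into triangles, then (N,V) contains a stable matching M with |M| = |N|/3 = 13q (i.e., in which every agent is matched). -/
open Finset

variable {A : Type*}

/-- `M` is a matching on agent set `N`: a set of pairwise disjoint triples of agents of `N`. -/
def IsMatching [DecidableEq A] (N : Finset A) (M : Finset (Finset A)) : Prop :=
  (∀ t ∈ M, t.card = 3 ∧ t ⊆ N) ∧ ∀ t ∈ M, ∀ s ∈ M, t ≠ s → Disjoint t s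

/-- The (additively separable) utility of agent `a` in matching `M` under valuations `val`:
the sum, over the triples of `M` containing `a`, of the valuations by `a` of the other
members; this is `0` if `a` is unmatched, and for a genuine matching it is the sum of the
valuations of `a`'s two partners. -/
def utility [DecidableEq A] (val : A → A → ℤ) (M : Finset (Finset A)) (a : A) : ℤ :=
  ∑ t ∈ M.filter (fun t => a ∈ t), ∑ b ∈ t.erase a, val a b

/-- The triple consisting of the three distinct agents `x, y, z` of `N` blocks `M`. -/
def Blocks [DecidableEq A] (N : Finset A) (val : A → A → ℤ) (M : Finset (Finset A))
    (x y z : A) : Prop :=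
  x ∈ N ∧ y ∈ N ∧ z ∈ N ∧ x ≠ y ∧ x ≠ z ∧ y ≠ z ∧
  utility val M x < val x y + val x z ∧
  utility val M y < val y x + val y z ∧
  utility val M z < val z x + val z y

/-- `M` is stable: no triple of agents of `N` blocks it. -/
def IsStable [DecidableEq A] (N : Finset A) (val : A → A → ℤ) (M : Finset (Finset A)) : Prop :=
  ∀ x y z : A, ¬ Blocks N val M x y z

/-- Binary symmetric preferences on `N`. -/
def BinSym [DecidableEq A] (N : Finset A) (val : A → A → ℤ) : Prop :=
  (∀ a ∈ N, ∀ b ∈ N, a ≠ b → val a b = 0 ∨ val a b = 1) ∧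
  (∀ a ∈ N, ∀ b ∈ N, val a b = val b a)

/-- A `P`-matching: a matching in which every matched agent has strictly positive utility. -/
def IsPMatching [DecidableEq A] (N : Finset A) (val : A → A → ℤ)
    (M : Finset (Finset A)) : Prop :=
  IsMatching N M ∧ ∀ a : A, (∃ t ∈ M, a ∈ t) → 0 < utility val M a

/-- `x, y, z` form a triangle: three distinct agents of `N` whose pairwise valuations
all equal `1`. -/
def IsTriangle [DecidableEq A] (N : Finset A) (val : A → A → ℤ) (x y z : A) : Prop :=
  x ∈ N ∧ y ∈ N ∧ z ∈ N ∧ x ≠ y ∧ x ≠ z ∧ y ≠ z ∧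
  val x y = 1 ∧ val y z = 1 ∧ val x z = 1

/-- The instance contains no triangle. -/
def TriangleFree [DecidableEq A] (N : Finset A) (val : A → A → ℤ) : Prop :=
  ∀ x y z : A, ¬ IsTriangle N val x y z

open Finset

/-- The agents of the instance constructed by the reduction from
Partition Into Triangles: `a i s` (for `s : Fin 2`), `b i` for each vertex `i`,
and pentagadget agents `p r t` (`t : Fin 5`, representing `p_r^{t+1}`). -/
inductive Agent (q : ℕ) : Type where
  | a : Fin (3*q) → Fin 2 → Agent q
  | b : Fin (3*q) → Agent q
  | p : Fin (6*q) → Fin 5 → Agent q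
  deriving DecidableEq, Fintype

/-- The valuation function of the instance constructed by the reduction from the graph `G`.
Note that, within a pentagadget, `p_r^t` assigns valuation `1` exactly to
`p_r^{t+1}, p_r^{t+2}, p_r^{t+4}` (indices mod 5). -/
def redVal (q : ℕ) (G : SimpleGraph (Fin (3*q))) [DecidableRel G.Adj] :
    Agent q → Agent q → ℤ
  | .a i s, .a j s' => if i = j ∧ s ≠ s' then 1 else 0
  | .a i _, .b j => if i = j then 1 else 0
  | .b i, .a j _ => if i = j then 1 else 0
  | .b i, .b j => if G.Adj i j then 1 else 0
  | .p r t, .p r' t' => if r = r' ∧ (t' - t = 1 ∨ t' - t = 2 ∨ t' - t = 4) then 1 else 0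
  | _, _ => 0

/-- A partition of the vertices of `G` into triangles. -/
def IsTrianglePartition {n : ℕ} (G : SimpleGraph (Fin n))
    (X : Finset (Finset (Fin n))) : Prop :=
  (∀ t ∈ X, t.card = 3 ∧ ∀ u ∈ t, ∀ v ∈ t, u ≠ v → G.Adj u v) ∧
  (∀ t ∈ X, ∀ s ∈ X, t ≠ s → Disjoint t s) ∧
  ∀ v : Fin n, ∃ t ∈ X, v ∈ t

/-! Take the triangles `{b_i, b_j, b_k}` of the partition and, in the pentagadget `r` assigned
to the agent `a_i^s`, the triples `{p_r^1, p_r^2, p_r^3}` and `{a_i^s, p_r^4, p_r^5}`: this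
matches all `39q` agents in `13q` triples. Each `b_i` then has utility `2`, the maximum, so it
lies in no blocking triple. Any other agent values positively only `b_i` and agents of its own
gadget (the pair `a_i^1, a_i^2`, or a pentagadget). Since utilities are nonnegative, every
member of a blocking triple values another member positively, so a blocking triple lies inside
one gadget. A pair is too small for that, and a finite check rules out a pentagadget, whose
agents have utilities `2, 2, 1, 1, 1`. -/

section Matching
variable [DecidableEq A] {N : Finset A} {M : Finset (Finset A)} {val : A → A → ℤ} {x y z : A}

lemma IsMatching.three_mul_card (hM : IsMatching N M) (hcover : ∀ a ∈ N, ∃ t ∈ M, a ∈ t) :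
    3 * #M = #N := by
  have hN : M.biUnion (fun t => t) = N := by
    ext a
    simp only [mem_biUnion]
    exact ⟨fun ⟨t, ht, hat⟩ => (hM.1 t ht).2 hat, hcover a⟩
  rw [← hN, card_biUnion hM.2, sum_congr rfl fun t ht => (hM.1 t ht).1, sum_const, smul_eq_mul,
    mul_comm]

lemma utility_nonneg (hval : ∀ a b, 0 ≤ val a b) (a : A) : 0 ≤ utility val M a :=
  sum_nonneg fun _ _ => sum_nonneg fun _ _ => hval _ _

lemma Blocks.rotate (h : Blocks N val M x y z) : Blocks N val M y z x := by
  obtain ⟨hx, hy, hz, hxy, hxz, hyz, ux, uy, uz⟩ := h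
  exact ⟨hy, hz, hx, hyz, hxy.symm, hxz.symm, by linarith, by linarith, ux⟩

lemma Blocks.val_pos_or_val_pos (h : Blocks N val M x y z) (hx : 0 ≤ utility val M x) :
    0 < val x y ∨ 0 < val x z := by
  by_contra! hc
  linarith [h.2.2.2.2.2.2.1]

end Matching

structure IsBlockMap (f : A → Finset A) : Prop where
  mem_self : ∀ x, x ∈ f x
  eq_of_mem : ∀ {x y}, x ∈ f y → f x = f y

section BlockMap
variable [DecidableEq A] [Fintype A] {f : A → Finset A}

lemma IsBlockMap.filter_mem_image (hf : IsBlockMap f) (x : A) :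
    (univ.image f).filter (x ∈ ·) = {f x} := by
  ext t
  simp only [mem_filter, mem_image, mem_univ, true_and, mem_singleton]
  constructor
  · rintro ⟨⟨y, rfl⟩, hx⟩
    exact (hf.eq_of_mem hx).symm
  · rintro rfl
    exact ⟨⟨x, rfl⟩, hf.mem_self x⟩

lemma IsBlockMap.utility_image (hf : IsBlockMap f) (val : A → A → ℤ) (x : A) :
    utility val (univ.image f) x = ∑ y ∈ (f x).erase x, val x y := by
  rw [utility, hf.filter_mem_image, sum_singleton]

lemma IsBlockMap.isMatching (hf : IsBlockMap f) (h3 : ∀ x, #(f x) = 3) :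
    IsMatching univ (univ.image f) := by
  refine ⟨?_, ?_⟩
  · simp only [mem_image, mem_univ, true_and, subset_univ, and_true, forall_exists_index,
      forall_apply_eq_imp_iff, h3, implies_true]
  · simp only [mem_image, mem_univ, true_and, forall_exists_index, forall_apply_eq_imp_iff]
    intro x y hxy
    refine disjoint_left.2 fun z hzx hzy => hxy ?_
    rw [← hf.eq_of_mem hzx, hf.eq_of_mem hzy]

lemma IsBlockMap.three_mul_card_image (hf : IsBlockMap f) (h3 : ∀ x, #(f x) = 3) :
    3 * #(univ.image f) = Fintype.card A :=
  (hf.isMatching h3).three_mul_card fun x _ => ⟨f x, mem_image_of_mem f (mem_univ x), hf.mem_self x⟩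

end BlockMap

lemma IsTrianglePartition.exists_isBlockMap {n : ℕ} {G : SimpleGraph (Fin n)}
    {X : Finset (Finset (Fin n))} (hX : IsTrianglePartition G X) :
    ∃ τ : Fin n → Finset (Fin n),
      IsBlockMap τ ∧ (∀ i, #(τ i) = 3) ∧ ∀ i, ∀ j ∈ τ i, i ≠ j → G.Adj i j := by
  choose τ hτX hτ using hX.2.2
  refine ⟨τ, ⟨hτ, fun {i j} hij => ?_⟩, fun i => (hX.1 _ (hτX i)).1,
    fun i => (hX.1 _ (hτX i)).2 i (hτ i)⟩
  by_contra hne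
  exact disjoint_left.1 (hX.2.1 _ (hτX i) _ (hτX j) hne) (hτ i) hij

namespace Agent
variable {q : ℕ}

def equivSum : Agent q ≃ (Fin (3*q) × Fin 2) ⊕ Fin (3*q) ⊕ (Fin (6*q) × Fin 5) where
  toFun
    | .a i s => .inl (i, s)
    | .b i => .inr (.inl i)
    | .p r t => .inr (.inr (r, t))
  invFun
    | .inl (i, s) => .a i s
    | .inr (.inl i) => .b i
    | .inr (.inr (r, t)) => .p r t
  left_inv x := by cases x <;> rfl
  right_inv x := by rcases x with ⟨i, s⟩ | i | ⟨r, t⟩ <;> rfl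

lemma fintype_card : Fintype.card (Agent q) = 39 * q := by
  rw [Fintype.card_congr equivSum]
  simp only [Fintype.card_sum, Fintype.card_prod, Fintype.card_fin]
  ring

/-- The pentagadget assigned to the agent `a_i^s`. -/
def pentIndex : Fin (3*q) × Fin 2 ≃ Fin (6*q) := finProdFinEquiv.trans (finCongr (by ring))

/-- `τ i` is the triangle containing `i`; recall that `p r t` is `p_r^{t+1}`. -/
def triple (τ : Fin (3*q) → Finset (Fin (3*q))) : Agent q → Finset (Agent q)
  | .a i s => {.a i s, .p (pentIndex (i, s)) 3, .p (pentIndex (i, s)) 4}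
  | .b i => (τ i).image .b
  | .p r t =>
    if t.val ≤ 2 then {.p r 0, .p r 1, .p r 2}
    else {.a (pentIndex.symm r).1 (pentIndex.symm r).2, .p r 3, .p r 4}

def gadget : Agent q → Fin (3*q) ⊕ Fin (6*q)
  | .a i _ | .b i => .inl i
  | .p r _ => .inr r

lemma exists_eq_a_of_gadget_eq {y : Agent q} {i : Fin (3*q)} (hy : ∀ j, y ≠ .b j)
    (h : gadget y = .inl i) : ∃ s, y = .a i s := by
  rcases y with ⟨j, s⟩ | j | ⟨r, t⟩ <;> simp_all [gadget]

lemma exists_eq_p_of_gadget_eq {y : Agent q} {r : Fin (6*q)} (h : gadget y = .inr r) :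
    ∃ t, y = .p r t := by
  rcases y with ⟨j, s⟩ | j | ⟨r, t⟩ <;> simp_all [gadget]

variable {τ : Fin (3*q) → Finset (Fin (3*q))}

lemma isBlockMap_triple (hτ : IsBlockMap τ) : IsBlockMap (triple τ) where
  mem_self x := by
    rcases x with ⟨i, s⟩ | i | ⟨r, t⟩
    · simp [triple]
    · simp [triple, hτ.mem_self]
    · simp only [triple]
      split_ifs <;> fin_cases t <;> simp_all
  eq_of_mem {x y} h := by
    rcases y with ⟨i, s⟩ | i | ⟨r, t⟩
    · simp only [triple, mem_insert, mem_singleton] at h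
      rcases h with rfl | rfl | rfl <;> simp [triple]
    · simp only [triple, mem_image] at h
      obtain ⟨j, hj, rfl⟩ := h
      simp [triple, hτ.eq_of_mem hj]
    · simp only [triple] at h ⊢
      split_ifs at h with ht <;> simp only [mem_insert, mem_singleton] at h <;>
        rcases h with rfl | rfl | rfl <;> simp [ht]

lemma card_triple (h3 : ∀ i, #(τ i) = 3) (x : Agent q) : #(triple τ x) = 3 := by
  rcases x with ⟨i, s⟩ | i | ⟨r, t⟩
  · simp [triple]
  · simp [triple, card_image_of_injective _ (fun i j h => b.inj h), h3]
  · simp only [triple]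
    split_ifs <;> simp

variable (G : SimpleGraph (Fin (3*q))) [DecidableRel G.Adj]

lemma redVal_nonneg (x y : Agent q) : 0 ≤ redVal q G x y := by
  unfold redVal; split <;> (try split_ifs) <;> norm_num

lemma redVal_le_one (x y : Agent q) : redVal q G x y ≤ 1 := by
  unfold redVal; split <;> (try split_ifs) <;> norm_num

lemma redVal_self (x : Agent q) : redVal q G x x = 0 := by
  rcases x with ⟨i, s⟩ | i | ⟨r, t⟩ <;> simp [redVal]

lemma gadget_eq_of_redVal_pos {x y : Agent q} (hx : ∀ i, x ≠ .b i) (h : 0 < redVal q G x y) :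
    gadget x = gadget y := by
  cases x <;> cases y <;> simp only [redVal, gadget] at h ⊢ <;> (try split_ifs at h) <;> simp_all

lemma utility_eq_sum_triple (hτ : IsBlockMap τ) (x : Agent q) :
    utility (redVal q G) (univ.image (triple τ)) x = ∑ y ∈ triple τ x, redVal q G x y := by
  rw [(isBlockMap_triple hτ).utility_image, sum_erase _ (redVal_self G x)]

lemma utility_b (hτ : IsBlockMap τ) (h3 : ∀ i, #(τ i) = 3)
    (hadj : ∀ i, ∀ j ∈ τ i, i ≠ j → G.Adj i j) (i : Fin (3*q)) :
    utility (redVal q G) (univ.image (triple τ)) (.b i) = 2 := by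
  have hnbhd : (τ i).filter (G.Adj i) = (τ i).erase i := by
    ext j
    simp only [mem_filter, mem_erase]
    exact ⟨fun ⟨hj, hij⟩ => ⟨hij.ne.symm, hj⟩, fun ⟨hji, hj⟩ => ⟨hj, hadj i j hj hji.symm⟩⟩
  simp only [utility_eq_sum_triple G hτ, triple, sum_image fun j _ k _ h => b.inj h, redVal]
  rw [sum_boole, hnbhd, card_erase_of_mem (hτ.mem_self i), h3]
  rfl

lemma utility_p (hτ : IsBlockMap τ) (r : Fin (6*q)) (t : Fin 5) :
    utility (redVal q G) (univ.image (triple τ)) (.p r t) = if t.val ≤ 1 then 2 else 1 := by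
  rw [utility_eq_sum_triple G hτ]
  fin_cases t <;> simp [triple, redVal] <;> decide

lemma not_blocks_pentagon (hτ : IsBlockMap τ) (r : Fin (6*q)) (t t' t'' : Fin 5) :
    ¬ Blocks univ (redVal q G) (univ.image (triple τ)) (.p r t) (.p r t') (.p r t'') := by
  rintro ⟨-, -, -, h1, h2, h3, hx, hy, hz⟩
  simp only [utility_p G hτ, redVal, true_and, ne_eq, p.injEq] at *
  revert t t' t''
  decide

theorem isStable_image_triple (hτ : IsBlockMap τ) (h3 : ∀ i, #(τ i) = 3)
    (hadj : ∀ i, ∀ j ∈ τ i, i ≠ j → G.Adj i j) :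
    IsStable univ (redVal q G) (univ.image (triple τ)) := by
  have not_b {x y z} (h : Blocks univ (redVal q G) (univ.image (triple τ)) x y z) :
      ∀ i, x ≠ .b i := by
    rintro i rfl
    have hx := h.2.2.2.2.2.2.1
    rw [utility_b G hτ h3 hadj] at hx
    linarith [redVal_le_one G (.b i) y, redVal_le_one G (.b i) z]
  have gadget_eq {x y z} (h : Blocks univ (redVal q G) (univ.image (triple τ)) x y z) :
      gadget x = gadget y ∨ gadget x = gadget z :=
    (h.val_pos_or_val_pos (utility_nonneg (redVal_nonneg G) x)).imp
      (gadget_eq_of_redVal_pos G (not_b h)) (gadget_eq_of_redVal_pos G (not_b h))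
  intro x y z h
  have hy := not_b h.rotate
  have hz := not_b h.rotate.rotate
  have hgad : gadget x = gadget y ∧ gadget x = gadget z := by
    have := gadget_eq h
    have := gadget_eq h.rotate
    have := gadget_eq h.rotate.rotate
    grind
  rcases x with ⟨i, s⟩ | i | ⟨r, t⟩
  · obtain ⟨s', rfl⟩ := exists_eq_a_of_gadget_eq hy hgad.1.symm
    obtain ⟨s'', rfl⟩ := exists_eq_a_of_gadget_eq hz hgad.2.symm
    obtain ⟨-, -, -, h1, h2, h3, -⟩ := h
    simp only [ne_eq, a.injEq, true_and] at h1 h2 h3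
    omega
  · exact not_b h i rfl
  · obtain ⟨t', rfl⟩ := exists_eq_p_of_gadget_eq hgad.1.symm
    obtain ⟨t'', rfl⟩ := exists_eq_p_of_gadget_eq hgad.2.symm
    exact not_blocks_pentagon G hτ r t t' t'' h

end Agent

/-- If `G` has a partition into triangles, then the instance constructed by the reduction
contains a stable matching in which every agent is matched, i.e. of cardinality
`|N|/3 = 13q`. -/
theorem stable_matching_of_trianglePartition
    (q : ℕ) (G : SimpleGraph (Fin (3*q))) [DecidableRel G.Adj]
    (hG : ∃ X, IsTrianglePartition G X) :
    ∃ M : Finset (Finset (Agent q)),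
      IsMatching (Finset.univ : Finset (Agent q)) M ∧
      IsStable Finset.univ (redVal q G) M ∧ M.card = 13 * q := by
  obtain ⟨X, hX⟩ := hG
  obtain ⟨τ, hτ, h3, hadj⟩ := hX.exists_isBlockMap
  have hblock := Agent.isBlockMap_triple hτ
  have hcard := hblock.three_mul_card_image (Agent.card_triple h3)
  rw [Agent.fintype_card] at hcard
  exact ⟨univ.image (Agent.triple τ), hblock.isMatching (Agent.card_triple h3),
    Agent.isStable_image_triple G hτ h3 hadj, by omega⟩
end

section
/- Let G=(W,E) be a simple undirected graph with W={w_1,…,w_{3q}}, let (N,V) be the instance of 3D-SR-AS-BIN constructed from G by the reduction, and let M be a stable matching in (N,V) with |M| = |N|/3. Then for every r with 1 ≤ r ≤ 6q, the five agents p_r^1, p_r^2, p_r^3, p_r^4, p_r^5 belong to exactly two triples of M. -/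
open Finset

variable {A : Type*}

open Finset

/-! Within its gadget `p_s` values exactly `p_{s+1}, p_{s+2}, p_{s+4}`, and it values nobody
outside it, so its utility counts how many of these three share its triple. As `|M| = |N|/3`,
every agent is matched. The triple `{p_s, p_{s+1}, p_{s+2}}` would give its members `2, 2, 1`,
so stability means that for every `s`, `p_s` or `p_{s+1}` already has utility `2`, or `p_{s+2}`
has positive utility. This forbids a gadget agent alone in its triple, and a partition of five
agents into blocks of sizes `2` and `3` has exactly two blocks. -/

section Matching

variable {A : Type*} [DecidableEq A] {N : Finset A} {M : Finset (Finset A)}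

lemma IsMatching.eq_of_mem_of_mem (hM : IsMatching N M) {t t' : Finset A} (ht : t ∈ M)
    (ht' : t' ∈ M) {a : A} (hat : a ∈ t) (hat' : a ∈ t') : t = t' := by
  by_contra hne
  exact disjoint_left.mp (hM.2 t ht t' ht' hne) hat hat'

lemma IsMatching.utility_eq (hM : IsMatching N M) (val : A → A → ℤ) {t : Finset A}
    (ht : t ∈ M) {a : A} (hat : a ∈ t) : utility val M a = ∑ b ∈ t.erase a, val a b := by
  have : M.filter (a ∈ ·) = {t} := by
    ext t'
    simp only [mem_filter, mem_singleton]
    exact ⟨fun h => hM.eq_of_mem_of_mem h.1 ht h.2 hat, fun h => h ▸ ⟨ht, hat⟩⟩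
  rw [utility, this, sum_singleton]

lemma IsMatching.exists_mem [Fintype A] (hM : IsMatching univ M)
    (hcard : Fintype.card A = 3 * #M) (a : A) : ∃ t ∈ M, a ∈ t := by
  have hcover : M.biUnion (fun t => t) = univ := by
    refine eq_univ_of_card _ ?_
    rw [card_biUnion hM.2, sum_congr rfl fun t ht => (hM.1 t ht).1, sum_const, smul_eq_mul,
      hcard, mul_comm]
  simpa using mem_biUnion.mp (hcover ▸ mem_univ a)

variable {ι : Type*} [Fintype ι] {f : ι → A} {T : ι → Finset A}

lemma IsMatching.card_filter_eq_le_three (hM : IsMatching N M) (hf : Function.Injective f)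
    (hTM : ∀ i, T i ∈ M) (hfT : ∀ i, f i ∈ T i) (i : ι) : #{j | T j = T i} ≤ 3 := by
  rw [← (hM.1 _ (hTM i)).1, ← card_map ⟨f, hf⟩]
  refine card_le_card fun a ha => ?_
  obtain ⟨j, hj, rfl⟩ := mem_map.mp ha
  exact (mem_filter.mp hj).2 ▸ hfT j

lemma IsMatching.filter_exists_mem_eq_image [DecidablePred fun t : Finset A => ∃ i, f i ∈ t]
    (hM : IsMatching N M) (hTM : ∀ i, T i ∈ M) (hfT : ∀ i, f i ∈ T i) :
    M.filter (fun t => ∃ i, f i ∈ t) = univ.image T := by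
  ext t
  simp only [mem_filter, mem_image, mem_univ, true_and]
  constructor
  · rintro ⟨ht, i, hi⟩
    exact ⟨i, hM.eq_of_mem_of_mem (hTM i) ht (hfT i) hi⟩
  · rintro ⟨i, rfl⟩
    exact ⟨hTM i, i, hfT i⟩

end Matching

lemma card_image_eq_two_of_card_fiber {α β : Type*} [Fintype α] [DecidableEq β] {f : α → β}
    (hα : Fintype.card α = 5) (hlo : ∀ i, 2 ≤ #{j | f j = f i})
    (hhi : ∀ i, #{j | f j = f i} ≤ 3) : #(univ.image f) = 2 := by
  have hfib : ∀ b ∈ univ.image f, 2 ≤ #{j | f j = b} ∧ #{j | f j = b} ≤ 3 := by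
    simp only [mem_image, mem_univ, true_and, forall_exists_index, forall_apply_eq_imp_iff]
    exact fun i => ⟨hlo i, hhi i⟩
  have hsum := card_eq_sum_card_image f univ
  rw [card_univ, hα] at hsum
  have hle := card_nsmul_le_sum _ _ 2 fun b hb => (hfib b hb).1
  have hge := sum_le_card_nsmul _ _ 3 fun b hb => (hfib b hb).2
  simp only [smul_eq_mul] at hle hge
  omega

section Pentagon

variable {β : Type*} [DecidableEq β]

/-- When `c s` is the triple containing `p_s`, this is the utility of `p_s`. -/
def likedMates (c : Fin 5 → β) (s : Fin 5) : ℕ :=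
  #{d ∈ ({1, 2, 4} : Finset (Fin 5)) | c (s + d) = c s}

/-- No triple `{p_s, p_{s+1}, p_{s+2}}` blocks. -/
def PentaStable (c : Fin 5 → β) : Prop :=
  ∀ s, 2 ≤ likedMates c s ∨ 2 ≤ likedMates c (s + 1) ∨ 1 ≤ likedMates c (s + 2)

lemma likedMates_eq (c : Fin 5 → β) (s : Fin 5) : likedMates c s =
    (if c (s + 1) = c s then 1 else 0) + (if c (s + 2) = c s then 1 else 0) +
      (if c (s + 4) = c s then 1 else 0) := by
  rw [likedMates, card_filter, sum_insert (by decide), sum_insert (by decide), sum_singleton,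
    add_assoc]

lemma PentaStable.comp_addRight {c : Fin 5 → β} (hc : PentaStable c) (x : Fin 5) :
    PentaStable fun i => c (i + x) := by
  intro s
  simpa only [likedMates, add_right_comm _ x] using hc (s + x)

lemma card_filter_comp_addRight_eq (c : Fin 5 → β) (x : Fin 5) (b : β) :
    #{j | c (j + x) = b} = #{j | c j = b} := by
  simp only [card_filter]
  exact Fintype.sum_equiv (Equiv.addRight x) _ _ fun _ => rfl

variable {c : Fin 5 → β}

/- If `p_0` is alone, stability at `3` makes `{2, 3, 4}` or `{1, 3, 4}` a block; then `1`,
resp. `2`, is alone too, which contradicts stability at `4`, resp. `0`. -/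
lemma PentaStable.exists_ne_zero_eq (hc : PentaStable c) (hsize : ∀ i, #{j | c j = c i} ≤ 3) :
    ∃ j ≠ 0, c j = c 0 := by
  by_contra! hlone
  have h3 := hc 3
  have h4 := hc 4
  have h0 := hc 0
  have s1 := hsize 1
  have s2 := hsize 2
  simp only [likedMates_eq, card_filter, Fin.sum_univ_five] at h3 h4 h0 s1 s2
  have := hlone 1
  have := hlone 2
  have := hlone 3
  have := hlone 4
  grind

lemma PentaStable.exists_ne_eq (hc : PentaStable c) (hsize : ∀ i, #{j | c j = c i} ≤ 3)
    (x : Fin 5) : ∃ j ≠ x, c j = c x := by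
  obtain ⟨j, hj, hjc⟩ := (hc.comp_addRight x).exists_ne_zero_eq
    fun i => (card_filter_comp_addRight_eq c x _).trans_le (hsize _)
  exact ⟨j + x, by simpa using hj, by simpa using hjc⟩

lemma PentaStable.card_image_eq_two (hc : PentaStable c) (hsize : ∀ i, #{j | c j = c i} ≤ 3) :
    #(univ.image c) = 2 := by
  refine card_image_eq_two_of_card_fiber (Fintype.card_fin 5) (fun i => ?_) hsize
  obtain ⟨j, hji, hj⟩ := hc.exists_ne_eq hsize i
  exact one_lt_card.mpr ⟨i, by simp, j, by simp [hj], hji.symm⟩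

end Pentagon

section Reduction

variable {q : ℕ} {G : SimpleGraph (Fin (3*q))} [DecidableRel G.Adj]

def Agent.equivSum_s4 (q : ℕ) :
    Agent q ≃ (Fin (3*q) × Fin 2) ⊕ Fin (3*q) ⊕ (Fin (6*q) × Fin 5) where
  toFun
    | .a i s => .inl (i, s)
    | .b i => .inr (.inl i)
    | .p r t => .inr (.inr (r, t))
  invFun
    | .inl (i, s) => .a i s
    | .inr (.inl i) => .b i
    | .inr (.inr (r, t)) => .p r t
  left_inv x := by cases x <;> rfl
  right_inv x := by rcases x with ⟨i, s⟩ | i | ⟨r, t⟩ <;> rfl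

lemma Agent.card (q : ℕ) : Fintype.card (Agent q) = 39 * q := by
  rw [Fintype.card_congr (Agent.equivSum_s4 q)]
  simp only [Fintype.card_sum, Fintype.card_prod, Fintype.card_fin]
  ring

lemma redVal_p (r : Fin (6*q)) (s : Fin 5) (b : Agent q) : redVal q G (.p r s) b =
    ∑ d ∈ ({1, 2, 4} : Finset (Fin 5)), if b = .p r (s + d) then 1 else 0 := by
  rw [sum_insert (by decide), sum_insert (by decide), sum_singleton]
  cases b with
  | a i u => simp [redVal]
  | b i => simp [redVal]
  | p r' t =>
    simp only [redVal, Agent.p.injEq]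
    by_cases hr : r = r'
    · subst hr
      simp only [true_and]
      revert s t
      decide
    · simp [hr, Ne.symm hr]

lemma redVal_p_add_one_add_two (r : Fin (6*q)) (s : Fin 5) :
    redVal q G (.p r s) (.p r (s + 1)) + redVal q G (.p r s) (.p r (s + 2)) = 2 ∧
    redVal q G (.p r (s + 1)) (.p r s) + redVal q G (.p r (s + 1)) (.p r (s + 2)) = 2 ∧
    redVal q G (.p r (s + 2)) (.p r s) + redVal q G (.p r (s + 2)) (.p r (s + 1)) = 1 := by
  simp only [redVal, true_and]
  revert s
  decide

variable {N : Finset (Agent q)} {M : Finset (Finset (Agent q))} {r : Fin (6*q)}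
  {T : Fin 5 → Finset (Agent q)}

lemma utility_p_eq_likedMates (hM : IsMatching N M) (hTM : ∀ s, T s ∈ M)
    (hpT : ∀ s, .p r s ∈ T s) (s : Fin 5) :
    utility (redVal q G) M (.p r s) = likedMates T s := by
  rw [hM.utility_eq _ (hTM s) (hpT s), likedMates, card_filter, Nat.cast_sum]
  simp_rw [redVal_p]
  rw [sum_comm]
  refine sum_congr rfl fun d hd => ?_
  have hmem : .p r (s + d) ∈ (T s).erase (.p r s) ↔ T (s + d) = T s := by
    have hd0 : d ≠ 0 := by rintro rfl; simp at hd
    rw [mem_erase, ne_eq, Agent.p.injEq, not_and, add_eq_left]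
    exact ⟨fun h => hM.eq_of_mem_of_mem (hTM _) (hTM s) (hpT _) h.2,
      fun h => ⟨fun _ => hd0, h ▸ hpT _⟩⟩
  rw [sum_ite_eq']
  simp only [hmem, Nat.cast_ite, Nat.cast_one, Nat.cast_zero]

lemma pentaStable_of_isStable (hM : IsMatching univ M) (hstable : IsStable univ (redVal q G) M)
    (hTM : ∀ s, T s ∈ M) (hpT : ∀ s, .p r s ∈ T s) : PentaStable T := by
  intro s
  by_contra! h
  have hu := utility_p_eq_likedMates (G := G) hM hTM hpT
  obtain ⟨h0, h1, h2⟩ := redVal_p_add_one_add_two (G := G) r s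
  refine hstable (.p r s) (.p r (s + 1)) (.p r (s + 2))
    ⟨mem_univ _, mem_univ _, mem_univ _, by simp, by simp, by simp, ?_, ?_, ?_⟩
  · rw [hu, h0]; exact_mod_cast h.1
  · rw [hu, h1]; exact_mod_cast h.2.1
  · rw [hu, h2]; exact_mod_cast h.2.2

end Reduction

/-- In any stable matching of the reduced instance in which every agent is matched, the five
agents of the `r`-th pentagadget belong to exactly two triples. -/
theorem pentagadget_in_two_triples
    (q : ℕ) (G : SimpleGraph (Fin (3*q))) [DecidableRel G.Adj]
    (M : Finset (Finset (Agent q)))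
    (hM : IsMatching (Finset.univ : Finset (Agent q)) M)
    (hstable : IsStable Finset.univ (redVal q G) M)
    (hcard : M.card = 13 * q) (r : Fin (6*q)) :
    (M.filter (fun t => ∃ s : Fin 5, Agent.p r s ∈ t)).card = 2 := by
  have hcover := hM.exists_mem (by rw [Agent.card, hcard]; ring)
  choose T hTM hpT using fun s : Fin 5 => hcover (.p r s)
  rw [hM.filter_exists_mem_eq_image hTM hpT]
  exact (pentaStable_of_isStable hM hstable hTM hpT).card_image_eq_two
    (hM.card_filter_eq_le_three (fun _ _ h => (Agent.p.inj h).2) hTM hpT)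
end

section
/- Let G=(W,E) be a simple undirected graph with W={w_1,…,w_{3q}}, let (N,V) be the instance of 3D-SR-AS-BIN constructed from G by the reduction, and let M be a stable matching in (N,V) with |M| = |N|/3. Then u_{b_i}(M) = 2 for every 1 ≤ i ≤ 3q. -/
open Finset

variable {A : Type*}

open Finset

/-!
Every agent has at most two partners and values each at most `1`, so no utility exceeds `2`.
The agents `a_i^1, a_i^2` value only each other and `b_i`, so either of them reaches utility `2`
only inside the triple `{a_i^1, a_i^2, b_i}`, where `b_i` has utility `2` as well. Otherwise,
if `b_i` had utility below `2`, all three would strictly gain from that triple, which would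
block the matching.
-/

lemma exists_mem_of_utility_ne_zero [DecidableEq A] {M : Finset (Finset A)} {val : A → A → ℤ}
    {a : A} (h : utility val M a ≠ 0) : ∃ t ∈ M, a ∈ t := by
  by_contra! hna
  exact h (by rw [utility, filter_false_of_mem hna, sum_empty])

namespace IsMatching

variable [DecidableEq A] {N : Finset A} {M : Finset (Finset A)} {val : A → A → ℤ}
  {t : Finset A} {a : A}

lemma filter_mem_eq_singleton (hM : IsMatching N M) (ht : t ∈ M) (ha : a ∈ t) :
    M.filter (a ∈ ·) = {t} := by
  ext s
  simp only [mem_filter, mem_singleton]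
  refine ⟨fun ⟨hs, has⟩ => ?_, fun hst => hst ▸ ⟨ht, ha⟩⟩
  by_contra hne
  exact disjoint_left.mp (hM.2 s hs t ht hne) has ha

lemma utility_eq_s6 (hM : IsMatching N M) (ht : t ∈ M) (ha : a ∈ t) :
    utility val M a = ∑ b ∈ t.erase a, val a b := by
  rw [utility, hM.filter_mem_eq_singleton ht ha, sum_singleton]

lemma card_erase (hM : IsMatching N M) (ht : t ∈ M) (ha : a ∈ t) : (t.erase a).card = 2 := by
  rw [card_erase_of_mem ha, (hM.1 t ht).1]

lemma utility_eq_add_of_triple_mem (hM : IsMatching N M) {x y z : A} (ht : {x, y, z} ∈ M)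
    (hxy : x ≠ y) (hxz : x ≠ z) (hyz : y ≠ z) :
    utility val M z = val z x + val z y := by
  have hperm : ({x, y, z} : Finset A) = insert z {x, y} := by
    rw [pair_comm y z, insert_comm x z]
  rw [hperm] at ht
  rw [hM.utility_eq_s6 ht (mem_insert_self _ _), erase_insert (by simp [hxz.symm, hyz.symm]),
    sum_pair hxy]

lemma utility_le_two (hM : IsMatching N M) (hval : ∀ a b, val a b ≤ 1) (a : A) :
    utility val M a ≤ 2 := by
  by_cases h0 : utility val M a = 0
  · rw [h0]; norm_num
  obtain ⟨t, ht, ha⟩ := exists_mem_of_utility_ne_zero h0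
  rw [hM.utility_eq_s6 ht ha]
  calc ∑ b ∈ t.erase a, val a b ≤ ∑ _b ∈ t.erase a, (1 : ℤ) :=
      sum_le_sum fun b _ => hval a b
    _ = 2 := by simp [hM.card_erase ht ha]

lemma eq_of_utility_eq_two (hM : IsMatching N M) (hval : ∀ a b, val a b ≤ 1) {x y z : A}
    (hlike : ∀ w, val x w = 1 → w = y ∨ w = z) (ht : t ∈ M) (hx : x ∈ t)
    (h2 : utility val M x = 2) : t = {x, y, z} := by
  have hpartners : ∀ w ∈ t.erase x, val x w = 1 := by
    by_contra! hlt
    obtain ⟨w, hw, hne⟩ := hlt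
    have : ∑ b ∈ t.erase x, val x b < ∑ _b ∈ t.erase x, (1 : ℤ) :=
      sum_lt_sum (fun b _ => hval x b) ⟨w, hw, lt_of_le_of_ne (hval x w) hne⟩
    simp [← hM.utility_eq_s6 ht hx, h2, hM.card_erase ht hx] at this
  have hsub : t ⊆ {x, y, z} := by
    intro w hw
    by_cases hwx : w = x
    · simp [hwx]
    · rcases hlike w (hpartners w (mem_erase.mpr ⟨hwx, hw⟩)) with rfl | rfl <;> simp
  exact eq_of_subset_of_card_le hsub ((hM.1 t ht).1 ▸ card_le_three)

end IsMatching

theorem IsStable.utility_eq_two [DecidableEq A] {N : Finset A} {M : Finset (Finset A)}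
    {val : A → A → ℤ} (hs : IsStable N val M) (hM : IsMatching N M)
    (hval : ∀ a b, val a b ≤ 1)
    {x y z : A} (hxN : x ∈ N) (hyN : y ∈ N) (hzN : z ∈ N)
    (hxy : x ≠ y) (hxz : x ≠ z) (hyz : y ≠ z)
    (vxy : val x y = 1) (vxz : val x z = 1) (vyx : val y x = 1) (vyz : val y z = 1)
    (vzx : val z x = 1) (vzy : val z y = 1)
    (hx : ∀ w, val x w = 1 → w = y ∨ w = z) (hy : ∀ w, val y w = 1 → w = x ∨ w = z) :
    utility val M z = 2 := by
  by_contra hz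
  have hz_lt : utility val M z < 2 := lt_of_le_of_ne (hM.utility_le_two hval z) hz
  have h_triple : {x, y, z} ∉ M := fun ht =>
    hz (by rw [hM.utility_eq_add_of_triple_mem ht hxy hxz hyz, vzx, vzy]; rfl)
  have hx_lt : utility val M x < 2 := by
    refine lt_of_le_of_ne (hM.utility_le_two hval x) fun hx2 => ?_
    obtain ⟨t, ht, hxt⟩ := exists_mem_of_utility_ne_zero (hx2 ▸ two_ne_zero)
    exact h_triple (hM.eq_of_utility_eq_two hval hx ht hxt hx2 ▸ ht)
  have hy_lt : utility val M y < 2 := by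
    refine lt_of_le_of_ne (hM.utility_le_two hval y) fun hy2 => ?_
    obtain ⟨t, ht, hyt⟩ := exists_mem_of_utility_ne_zero (hy2 ▸ two_ne_zero)
    rw [hM.eq_of_utility_eq_two hval hy ht hyt hy2, insert_comm] at ht
    exact h_triple ht
  exact hs x y z ⟨hxN, hyN, hzN, hxy, hxz, hyz, by rw [vxy, vxz]; exact hx_lt,
    by rw [vyx, vyz]; exact hy_lt, by rw [vzx, vzy]; exact hz_lt⟩

section Reduction

variable {q : ℕ} (G : SimpleGraph (Fin (3*q))) [DecidableRel G.Adj]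

lemma redVal_le_one (x y : Agent q) : redVal q G x y ≤ 1 := by
  cases x <;> cases y <;> simp only [redVal] <;> (try split_ifs) <;> norm_num

lemma redVal_a_eq_one {i : Fin (3*q)} {s s' : Fin 2} (hss' : s ≠ s') (w : Agent q)
    (hw : redVal q G (.a i s) w = 1) : w = .a i s' ∨ w = .b i := by
  cases w with
  | a j s'' =>
    simp only [redVal] at hw
    split_ifs at hw with h
    · obtain ⟨rfl, hs''⟩ := h
      left
      congr 1
      omega
    · simp at hw
  | b j => simp only [redVal] at hw; split_ifs at hw with h <;> simp_all
  | p r t => simp [redVal] at hw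

end Reduction

theorem b_agents_utility_two_general
    (q : ℕ) (G : SimpleGraph (Fin (3*q))) [DecidableRel G.Adj]
    (M : Finset (Finset (Agent q)))
    (hM : IsMatching (Finset.univ : Finset (Agent q)) M)
    (hstable : IsStable Finset.univ (redVal q G) M)
    (i : Fin (3*q)) :
    utility (redVal q G) M (Agent.b i) = 2 := by
  have h01 : (0 : Fin 2) ≠ 1 := by decide
  exact hstable.utility_eq_two hM (redVal_le_one G) (mem_univ (.a i 0)) (mem_univ (.a i 1))
    (mem_univ _) (by simp [h01]) (by simp) (by simp) (by simp [redVal, h01]) (by simp [redVal])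
    (by simp [redVal, h01.symm]) (by simp [redVal]) (by simp [redVal]) (by simp [redVal])
    (redVal_a_eq_one G h01) (redVal_a_eq_one G h01.symm)

/-- In any stable matching of the reduced instance in which every agent is matched, every
agent `b_i` has utility `2`. -/
theorem b_agents_utility_two
    (q : ℕ) (G : SimpleGraph (Fin (3*q))) [DecidableRel G.Adj]
    (M : Finset (Finset (Agent q)))
    (hM : IsMatching (Finset.univ : Finset (Agent q)) M)
    (hstable : IsStable Finset.univ (redVal q G) M)
    (hcard : M.card = 13 * q) (i : Fin (3*q)) :
    utility (redVal q G) M (Agent.b i) = 2 :=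
  b_agents_utility_two_general q G M hM hstable i
end

section
/- Let (N,V) be an instance of 3D-SR-SAS-BIN, let M_△ be a maximal set of pairwise disjoint triangles of (N,V) (maximal in the sense that every triangle of (N,V) shares at least one agent with some triangle in M_△), let N' = N ∖ ∪M_△, and let (N',V') be the sub-instance of (N,V) induced on N'. If M is a stable P-matching in (N',V'), then M ∪ M_△ is a stable P-matching in (N,V). -/
open Finset

variable {A : Type*}

/-!
Under binary preferences no agent can get more than `1 + 1 = 2` from a triple, and every agent
of a triangle in `M ∪ Mt` gets exactly `2`; so no triangle agent is in a blocking triple. The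
remaining agents have the same utility in `M ∪ Mt` as in `M`, so a triple blocking `M ∪ Mt`
would already block `M` in the sub-instance.
-/

section Matching

variable [DecidableEq A] {val : A → A → ℤ} {N N₁ N₂ : Finset A} {M M₁ M₂ : Finset (Finset A)}
  {t : Finset A} {a : A}

theorem utility_union_left (h : ∀ s ∈ M₂, a ∉ s) :
    utility val (M₁ ∪ M₂) a = utility val M₁ a := by
  rw [utility, filter_union, filter_false_of_mem h, union_empty, utility]

theorem utility_union_right (h : ∀ s ∈ M₁, a ∉ s) :
    utility val (M₁ ∪ M₂) a = utility val M₂ a := by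
  rw [union_comm, utility_union_left h]

theorem IsMatching.notMem_of_notMem (hM : IsMatching N M) (ha : a ∉ N) : ∀ s ∈ M, a ∉ s :=
  fun s hs has => ha ((hM.1 s hs).2 has)

theorem IsMatching.filter_mem_eq_singleton_s8 (hM : IsMatching N M) (ht : t ∈ M) (ha : a ∈ t) :
    M.filter (a ∈ ·) = {t} := by
  ext s
  simp only [mem_filter, mem_singleton]
  refine ⟨fun ⟨hs, has⟩ => ?_, by rintro rfl; exact ⟨ht, ha⟩⟩
  by_contra hst
  exact disjoint_left.1 (hM.2 s hs t ht hst) has ha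

theorem IsMatching.utility_eq_sum (hM : IsMatching N M) (ht : t ∈ M) (ha : a ∈ t) :
    utility val M a = ∑ b ∈ t.erase a, val a b := by
  rw [utility, hM.filter_mem_eq_singleton_s8 ht ha, sum_singleton]

theorem IsMatching.utility_eq_two (hM : IsMatching N M) (ht : t ∈ M) (hcard : t.card = 3)
    (hval : ∀ x ∈ t, ∀ y ∈ t, x ≠ y → val x y = 1) (ha : a ∈ t) : utility val M a = 2 := by
  have hone : ∀ b ∈ t.erase a, val a b = 1 := fun b hb =>
    hval a ha b (mem_of_mem_erase hb) (ne_of_mem_erase hb).symm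
  rw [hM.utility_eq_sum ht ha, sum_congr rfl hone, sum_const, card_erase_of_mem ha, hcard]
  rfl

theorem isMatching_biUnion (hcard : ∀ t ∈ M, t.card = 3)
    (hdisj : ∀ t ∈ M, ∀ s ∈ M, t ≠ s → Disjoint t s) : IsMatching (M.biUnion id) M :=
  ⟨fun t ht => ⟨hcard t ht, subset_biUnion_of_mem id ht⟩, hdisj⟩

theorem IsMatching.union (h₁ : IsMatching N₁ M₁) (h₂ : IsMatching N₂ M₂) (hN : Disjoint N₁ N₂) :
    IsMatching (N₁ ∪ N₂) (M₁ ∪ M₂) := by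
  have cross : ∀ t ∈ M₁, ∀ s ∈ M₂, Disjoint t s := fun t ht s hs =>
    hN.mono (h₁.1 t ht).2 (h₂.1 s hs).2
  refine ⟨fun t ht => ?_, fun t ht s hs hts => ?_⟩
  · rcases mem_union.1 ht with ht | ht
    · exact ⟨(h₁.1 t ht).1, (h₁.1 t ht).2.trans subset_union_left⟩
    · exact ⟨(h₂.1 t ht).1, (h₂.1 t ht).2.trans subset_union_right⟩
  · rcases mem_union.1 ht with ht | ht <;> rcases mem_union.1 hs with hs | hs
    · exact h₁.2 t ht s hs hts
    · exact cross t ht s hs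
    · exact (cross s hs t ht).symm
    · exact h₂.2 t ht s hs hts

theorem IsPMatching.union (h₁ : IsPMatching N₁ val M₁) (h₂ : IsPMatching N₂ val M₂)
    (hN : Disjoint N₁ N₂) : IsPMatching (N₁ ∪ N₂) val (M₁ ∪ M₂) := by
  refine ⟨h₁.1.union h₂.1 hN, fun a ⟨t, ht, hat⟩ => ?_⟩
  rcases mem_union.1 ht with ht | ht
  · have haN : a ∉ N₂ := disjoint_left.1 hN ((h₁.1.1 t ht).2 hat)
    rw [utility_union_left (h₂.1.notMem_of_notMem haN)]
    exact h₁.2 a ⟨t, ht, hat⟩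
  · have haN : a ∉ N₁ := disjoint_right.1 hN ((h₂.1.1 t ht).2 hat)
    rw [utility_union_right (h₁.1.notMem_of_notMem haN)]
    exact h₂.2 a ⟨t, ht, hat⟩

end Matching

section Blocking

variable [DecidableEq A] {val : A → A → ℤ} {N N' : Finset A} {M M' : Finset (Finset A)}
  {x y z : A}

theorem BinSym.val_le_one (h : BinSym N val) : ∀ a ∈ N, ∀ b ∈ N, a ≠ b → val a b ≤ 1 :=
  fun a ha b hb hab => by rcases h.1 a ha b hb hab with h | h <;> omega

theorem Blocks.utility_lt_two (hle : ∀ a ∈ N, ∀ b ∈ N, a ≠ b → val a b ≤ 1)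
    (h : Blocks N val M x y z) :
    utility val M x < 2 ∧ utility val M y < 2 ∧ utility val M z < 2 := by
  obtain ⟨hx, hy, hz, hxy, hxz, hyz, hux, huy, huz⟩ := h
  have := hle x hx y hy hxy
  have := hle x hx z hz hxz
  have := hle y hy x hx hxy.symm
  have := hle y hy z hz hyz
  have := hle z hz x hx hxz.symm
  have := hle z hz y hy hyz.symm
  omega

theorem Blocks.of_utility_eq (h : Blocks N val M x y z) (hx : x ∈ N') (hy : y ∈ N')
    (hz : z ∈ N') (hu : ∀ a ∈ N', utility val M a = utility val M' a) :
    Blocks N' val M' x y z := by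
  obtain ⟨-, -, -, hxy, hxz, hyz, hux, huy, huz⟩ := h
  rw [hu x hx] at hux
  rw [hu y hy] at huy
  rw [hu z hz] at huz
  exact ⟨hx, hy, hz, hxy, hxz, hyz, hux, huy, huz⟩

end Blocking

theorem union_maximal_triangles_stable_general [DecidableEq A]
    (N : Finset A) (val : A → A → ℤ) (hbs : BinSym N val)
    (Mt : Finset (Finset A))
    (hMt_tri : ∀ t ∈ Mt, t.card = 3 ∧ t ⊆ N ∧ ∀ x ∈ t, ∀ y ∈ t, x ≠ y → val x y = 1)
    (hMt_disj : ∀ t ∈ Mt, ∀ s ∈ Mt, t ≠ s → Disjoint t s)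
    (M : Finset (Finset A))
    (hM : IsPMatching (N \ Mt.biUnion id) val M)
    (hMst : IsStable (N \ Mt.biUnion id) val M) :
    IsPMatching N val (M ∪ Mt) ∧ IsStable N val (M ∪ Mt) := by
  set U := Mt.biUnion id
  have hU : U ⊆ N := biUnion_subset.2 fun t ht => (hMt_tri t ht).2.1
  have hMtU : IsMatching U Mt := isMatching_biUnion (fun t ht => (hMt_tri t ht).1) hMt_disj
  have hMt_two : ∀ a ∈ U, utility val Mt a = 2 := fun a ha => by
    obtain ⟨t, ht, hat⟩ := mem_biUnion.1 ha
    exact hMtU.utility_eq_two ht (hMt_tri t ht).1 (hMt_tri t ht).2.2 hat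
  have hMtP : IsPMatching U val Mt :=
    ⟨hMtU, fun a ⟨t, ht, hat⟩ => by rw [hMt_two a (mem_biUnion.2 ⟨t, ht, hat⟩)]; norm_num⟩
  have hP := hM.union hMtP disjoint_sdiff_self_left
  rw [sdiff_union_of_subset hU] at hP
  refine ⟨hP, fun x y z hblk => hMst x y z ?_⟩
  have hout : ∀ a ∈ N, utility val (M ∪ Mt) a < 2 → a ∈ N \ U := fun a haN hlt =>
    mem_sdiff.2 ⟨haN, fun ha => by
      rw [utility_union_right (hM.1.notMem_of_notMem (notMem_sdiff_of_mem_right ha)),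
        hMt_two a ha] at hlt
      exact lt_irrefl _ hlt⟩
  have hsame : ∀ a ∈ N \ U, utility val (M ∪ Mt) a = utility val M a := fun a ha =>
    utility_union_left (hMtU.notMem_of_notMem (mem_sdiff.1 ha).2)
  obtain ⟨hx, hy, hz⟩ := hblk.utility_lt_two hbs.val_le_one
  exact hblk.of_utility_eq (hout x hblk.1 hx) (hout y hblk.2.1 hy) (hout z hblk.2.2.1 hz) hsame

/-- Removing a maximal set `Mt` of pairwise disjoint triangles from a binary symmetric
instance: if `M` is a stable `P`-matching in the sub-instance induced on the remaining
agents `N \ ∪ Mt`, then `M ∪ Mt` is a stable `P`-matching in `(N, V)`. -/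
theorem union_maximal_triangles_stable [DecidableEq A]
    (N : Finset A) (val : A → A → ℤ) (hbs : BinSym N val)
    (Mt : Finset (Finset A))
    (hMt_tri : ∀ t ∈ Mt, t.card = 3 ∧ t ⊆ N ∧ ∀ x ∈ t, ∀ y ∈ t, x ≠ y → val x y = 1)
    (hMt_disj : ∀ t ∈ Mt, ∀ s ∈ Mt, t ≠ s → Disjoint t s)
    (hmax : ∀ x y z : A, IsTriangle N val x y z → ∃ t ∈ Mt, x ∈ t ∨ y ∈ t ∨ z ∈ t)
    (M : Finset (Finset A))
    (hM : IsPMatching (N \ Mt.biUnion id) val M)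
    (hMst : IsStable (N \ Mt.biUnion id) val M) :
    IsPMatching N val (M ∪ Mt) ∧ IsStable N val (M ∪ Mt) :=
  union_maximal_triangles_stable_general N val hbs Mt hMt_tri hMt_disj M hM hMst
end

section
/- Let (N,V) be an instance of 3D-SR-SAS-BIN and let M_A be a stable matching in (N,V) such that for all distinct agents α, β with val_α(β) = 1 we have u_α(M_A) + u_β(M_A) ≥ 1. Then for any three distinct agents h1, h2, h3 with val_{h1}(h2) = val_{h2}(h3) = val_{h3}(h1) = 1 (a triangle), u_{h1}(M_A) + u_{h2}(M_A) + u_{h3}(M_A) ≥ 3. -/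
open Finset

variable {A : Type*}

theorem IsStable.exists_le_utility [DecidableEq A] {N : Finset A} {val : A → A → ℤ}
    {M : Finset (Finset A)} (hst : IsStable N val M) {x y z : A}
    (hx : x ∈ N) (hy : y ∈ N) (hz : z ∈ N) (hxy : x ≠ y) (hxz : x ≠ z) (hyz : y ≠ z) :
    val x y + val x z ≤ utility val M x ∨ val y x + val y z ≤ utility val M y ∨
      val z x + val z y ≤ utility val M z := by
  by_contra! h
  exact hst x y z ⟨hx, hy, hz, hxy, hxz, hyz, h.1, h.2.1, h.2.2⟩

theorem triangle_total_utility_ge_three_general [DecidableEq A]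
    (N : Finset A) (val : A → A → ℤ) (hbs : BinSym N val)
    (MA : Finset (Finset A)) (hst : IsStable N val MA)
    (hprop : ∀ a ∈ N, ∀ b ∈ N, a ≠ b → val a b = 1 →
      1 ≤ utility val MA a + utility val MA b)
    (h1 h2 h3 : A) (hh1 : h1 ∈ N) (hh2 : h2 ∈ N) (hh3 : h3 ∈ N)
    (hne12 : h1 ≠ h2) (hne13 : h1 ≠ h3) (hne23 : h2 ≠ h3)
    (hv12 : val h1 h2 = 1) (hv23 : val h2 h3 = 1) (hv31 : val h3 h1 = 1) :
    3 ≤ utility val MA h1 + utility val MA h2 + utility val MA h3 := by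
  have hv13 : val h1 h3 = 1 := (hbs.2 h1 hh1 h3 hh3).trans hv31
  have hv21 : val h2 h1 = 1 := (hbs.2 h2 hh2 h1 hh1).trans hv12
  have hv32 : val h3 h2 = 1 := (hbs.2 h3 hh3 h2 hh2).trans hv23
  have h12 := hprop h1 hh1 h2 hh2 hne12 hv12
  have h23 := hprop h2 hh2 h3 hh3 hne23 hv23
  have h31 := hprop h3 hh3 h1 hh1 hne13.symm hv31
  -- The triangle cannot block, so one of its agents has utility 2; the opposite edge adds 1.
  rcases hst.exists_le_utility hh1 hh2 hh3 hne12 hne13 hne23 with h | h | h <;> linarith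

/-- If `M_A` is a stable matching of a binary symmetric instance such that any two distinct
agents valuing each other `1` have total utility at least `1`, then the three agents of any
triangle have total utility at least `3` in `M_A`. -/
theorem triangle_total_utility_ge_three [DecidableEq A]
    (N : Finset A) (val : A → A → ℤ) (hbs : BinSym N val)
    (MA : Finset (Finset A)) (hMA : IsMatching N MA) (hst : IsStable N val MA)
    (hprop : ∀ a ∈ N, ∀ b ∈ N, a ≠ b → val a b = 1 →
      1 ≤ utility val MA a + utility val MA b)
    (h1 h2 h3 : A) (hh1 : h1 ∈ N) (hh2 : h2 ∈ N) (hh3 : h3 ∈ N)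
    (hne12 : h1 ≠ h2) (hne13 : h1 ≠ h3) (hne23 : h2 ≠ h3)
    (hv12 : val h1 h2 = 1) (hv23 : val h2 h3 = 1) (hv31 : val h3 h1 = 1) :
    3 ≤ utility val MA h1 + utility val MA h2 + utility val MA h3 :=
  triangle_total_utility_ge_three_general N val hbs MA hst hprop h1 h2 h3 hh1 hh2 hh3 hne12 hne13
    hne23 hv12 hv23 hv31
end
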